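/- Let 𝒞 be a root class of groups consisting only of periodic groups and let 𝒩𝒞 be the class of all nilpotent 𝒞-groups. Suppose X is a group, Y is a normal subgroup of X, and there exists a homomorphism σ of X onto a 𝒞-bounded nilpotent group that is injective on Y. Then for any subgroup M of Y that is normal in X and satisfies Y/M ∈ 𝒞, there exists a normal subgroup N of X with X/N ∈ 𝒩𝒞 and N ∩ Y = M; in particular, X is 𝒞-regular with respect to Y. -/

import Mathlib

universe u

/-- A class of groups: a property of groups in universe `u`. -/
abbrev GroupClass : Type (u + 1) := ∀ (G : Type u) [Group G], Prop

namespace Paper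

/-- The class `C` consists only of periodic (torsion) groups. -/
def IsPeriodicClass (C : GroupClass.{u}) : Prop :=
  ∀ (G : Type u) [Group G], C G → ∀ g : G, IsOfFinOrder g

/-- `C` is a root class: closed under isomorphism, contains a non-trivial group, and is
closed under subgroups, extensions, and Cartesian powers `Y → X` with `X, Y ∈ C`. -/
def IsRootClass (C : GroupClass.{u}) : Prop :=
  (∀ (G H : Type u) [Group G] [Group H], (G ≃* H) → C G → C H) ∧
  (∃ (G : Type u) (_ : Group G), C G ∧ Nontrivial G) ∧
  (∀ (G : Type u) [Group G], C G → ∀ H : Subgroup G, C H) ∧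
  (∀ (G : Type u) [Group G] (N : Subgroup G) [N.Normal], C N → C (G ⧸ N) → C G) ∧
  (∀ (X Y : Type u) [Group X] [Group Y], C X → C Y → C (Y → X))

/-- `𝔓(C)`: the set of primes dividing the order of some element of some `C`-group. -/
def classPrimes (C : GroupClass.{u}) : Set ℕ :=
  {p | p.Prime ∧ ∃ (G : Type u) (_ : Group G), C G ∧ ∃ g : G, p ∣ orderOf g}

/-- `Y` is `𝔓′`-isolated in `X` (here `P` plays the role of `𝔓`). -/
def IsolatedIn {X : Type u} [Group X] (P : Set ℕ) (Y : Subgroup X) : Prop :=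
  ∀ x : X, ∀ q : ℕ, q.Prime → q ∉ P → x ^ q ∈ Y → x ∈ Y

/-- `X` has no `𝔓′`-torsion. -/
def NoPrimeTorsion (P : Set ℕ) (X : Type u) [Group X] : Prop :=
  ∀ x : X, ∀ q : ℕ, q.Prime → q ∉ P → x ^ q = 1 → x = 1

/-- `q` is a `P`-number: a positive integer all of whose prime divisors lie in `P`. -/
def IsPNumber (P : Set ℕ) (q : ℕ) : Prop :=
  0 < q ∧ ∀ p : ℕ, p.Prime → p ∣ q → p ∈ P

/-- The `𝔓′`-isolator of `Y` in `X`: the smallest `𝔓′`-isolated subgroup containing `Y`. -/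
def isolator {X : Type u} [Group X] (P : Set ℕ) (Y : Subgroup X) : Subgroup X :=
  sInf {Z : Subgroup X | Y ≤ Z ∧ IsolatedIn P Z}

/-- The set `𝔓′-Rt(X, Y)` of `𝔓′`-roots of elements of `Y`. -/
def rootSet {X : Type u} [Group X] (P : Set ℕ) (Y : Subgroup X) : Set X :=
  {x : X | ∃ q : ℕ, IsPNumber Pᶜ q ∧ x ^ q ∈ Y}

/-- `Y` is `C`-separable in `X`. -/
def SeparableIn (C : GroupClass.{u}) {X : Type u} [Group X] (Y : Subgroup X) : Prop :=
  ∀ x : X, x ∉ Y → ∃ (Q : Type u) (_ : Group Q) (σ : X →* Q),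
    C Q ∧ Function.Surjective σ ∧ σ x ∉ Y.map σ

/-- `X` has the property `C`-Sep: every `𝔓(C)′`-isolated subgroup is `C`-separable. -/
def HasSepProp (C : GroupClass.{u}) (X : Type u) [Group X] : Prop :=
  ∀ Y : Subgroup X, IsolatedIn (classPrimes C) Y → SeparableIn C Y

/-- `X` is residually a `D`-group. -/
def Residually (D : GroupClass.{u}) (X : Type u) [Group X] : Prop :=
  ∀ x : X, x ≠ 1 → ∃ (Q : Type u) (_ : Group Q) (σ : X →* Q),
    D Q ∧ Function.Surjective σ ∧ σ x ≠ 1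

/-- Every primary `P`-component of every quotient of `A` has finite exponent
(for abelian `A` this says `A` is weakly bounded w.r.t. the set of primes `P`). -/
def WeaklyBounded (P : Set ℕ) (A : Type u) [Group A] : Prop :=
  ∀ (H : Subgroup A) [H.Normal], ∀ p ∈ P,
    ∃ e : ℕ, 0 < e ∧ ∀ x : A ⧸ H, (∃ n : ℕ, x ^ p ^ n = 1) → x ^ e = 1

/-- Every primary `𝔓(C)`-component of every quotient of `A` has finite exponent and
cardinality not exceeding the cardinality of some `C`-group. -/
def Bounded (C : GroupClass.{u}) (A : Type u) [Group A] : Prop :=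
  ∀ (H : Subgroup A) [H.Normal], ∀ p ∈ classPrimes C,
    (∃ e : ℕ, 0 < e ∧ ∀ x : A ⧸ H, (∃ n : ℕ, x ^ p ^ n = 1) → x ^ e = 1) ∧
    ∃ (G : Type u) (_ : Group G), C G ∧
      Cardinal.mk {x : A ⧸ H // ∃ n : ℕ, x ^ p ^ n = 1} ≤ Cardinal.mk G

/-- The factor `A / B` (for `B ≤ A` subgroups of an ambient group) is `C`-bounded. -/
def FactorBounded (C : GroupClass.{u}) {X : Type u} [Group X] (B A : Subgroup X)
    (hN : (B.subgroupOf A).Normal) : Prop :=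
  letI := hN
  Bounded C (↥A ⧸ B.subgroupOf A)

/-- The factor `A / B` is weakly bounded w.r.t. the set of primes `P`. -/
def FactorWeaklyBounded (P : Set ℕ) {X : Type u} [Group X] (B A : Subgroup X)
    (hN : (B.subgroupOf A).Normal) : Prop :=
  letI := hN
  WeaklyBounded P (↥A ⧸ B.subgroupOf A)

/-- `X` is a `C`-bounded nilpotent group: it has a finite central series with
`C`-bounded abelian factors. -/
def BoundedNilpotent (C : GroupClass.{u}) (X : Type u) [Group X] : Prop :=
  ∃ (n : ℕ) (H : ℕ → Subgroup X),
    H 0 = ⊥ ∧ H n = ⊤ ∧ (∀ i, H i ≤ H (i + 1)) ∧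
    (∀ i, ∀ x ∈ H (i + 1), ∀ g : X, x * g * x⁻¹ * g⁻¹ ∈ H i) ∧
    (∀ i, ∀ hN : ((H i).subgroupOf (H (i + 1))).Normal, FactorBounded C (H i) (H (i + 1)) hN)

/-- `X` is a weakly `C`-bounded nilpotent group (`P = 𝔓(C)`). -/
def WeaklyBoundedNilpotent (P : Set ℕ) (X : Type u) [Group X] : Prop :=
  ∃ (n : ℕ) (H : ℕ → Subgroup X),
    H 0 = ⊥ ∧ H n = ⊤ ∧ (∀ i, H i ≤ H (i + 1)) ∧
    (∀ i, ∀ x ∈ H (i + 1), ∀ g : X, x * g * x⁻¹ * g⁻¹ ∈ H i) ∧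
    (∀ i, ∀ hN : ((H i).subgroupOf (H (i + 1))).Normal,
      FactorWeaklyBounded P (H i) (H (i + 1)) hN)

/-- `X` is a `C`-bounded solvable group: it has a finite subnormal series with
`C`-bounded abelian factors. -/
def BoundedSolvable (C : GroupClass.{u}) (X : Type u) [Group X] : Prop :=
  ∃ (n : ℕ) (H : ℕ → Subgroup X),
    H 0 = ⊥ ∧ H n = ⊤ ∧ (∀ i, H i ≤ H (i + 1)) ∧
    (∀ i, ∀ g ∈ H (i + 1), ∀ x ∈ H i, g * x * g⁻¹ ∈ H i) ∧
    (∀ i, ∀ x ∈ H (i + 1), ∀ y ∈ H (i + 1), x * y * x⁻¹ * y⁻¹ ∈ H i) ∧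
    (∀ i, ∀ hN : ((H i).subgroupOf (H (i + 1))).Normal, FactorBounded C (H i) (H (i + 1)) hN)

/-- `X` is a weakly `C`-bounded solvable group (`P = 𝔓(C)`). -/
def WeaklyBoundedSolvable (P : Set ℕ) (X : Type u) [Group X] : Prop :=
  ∃ (n : ℕ) (H : ℕ → Subgroup X),
    H 0 = ⊥ ∧ H n = ⊤ ∧ (∀ i, H i ≤ H (i + 1)) ∧
    (∀ i, ∀ g ∈ H (i + 1), ∀ x ∈ H i, g * x * g⁻¹ ∈ H i) ∧
    (∀ i, ∀ x ∈ H (i + 1), ∀ y ∈ H (i + 1), x * y * x⁻¹ * y⁻¹ ∈ H i) ∧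
    (∀ i, ∀ hN : ((H i).subgroupOf (H (i + 1))).Normal,
      FactorWeaklyBounded P (H i) (H (i + 1)) hN)

/-- The class `C-BN` of `C`-bounded nilpotent groups. -/
def BNclass (C : GroupClass.{u}) : GroupClass.{u} := fun G _ => BoundedNilpotent C G

/-- The class `C-BN_{𝔓(C)}` of `𝔓(C)′`-torsion-free `C`-bounded nilpotent groups. -/
def BNPclass (C : GroupClass.{u}) : GroupClass.{u} :=
  fun G _ => BoundedNilpotent C G ∧ NoPrimeTorsion (classPrimes C) G

/-- The class `𝒩C` of nilpotent `C`-groups. -/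
def NilpClass (C : GroupClass.{u}) : GroupClass.{u} := fun G _ => C G ∧ Group.IsNilpotent G

end Paper

namespace Paper


section Aux
variable {C : GroupClass.{u}}

lemma Ciso (hroot : IsRootClass C) {G H : Type u} [Group G] [Group H] (e : G ≃* H) (hG : C G) :
    C H := hroot.1 G H e hG

lemma Csub (hroot : IsRootClass C) {G : Type u} [Group G] (hG : C G) (H : Subgroup G) : C H :=
  hroot.2.2.1 G hG H

lemma Cext (hroot : IsRootClass C) {G : Type u} [Group G] (N : Subgroup G) [N.Normal]
    (h1 : C N) (h2 : C (G ⧸ N)) : C G := hroot.2.2.2.1 G N h1 h2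

lemma Cpow (hroot : IsRootClass C) {X Y : Type u} [Group X] [Group Y] (hX : C X) (hY : C Y) :
    C (Y → X) := hroot.2.2.2.2 X Y hX hY

lemma Ctrivial (hroot : IsRootClass C) (G : Type u) [Group G] [Subsingleton G] : C G := by
  obtain ⟨G₀, _, hG₀, _⟩ := hroot.2.1
  have h : C ↥(⊥ : Subgroup G₀) := Csub hroot hG₀ ⊥
  refine Ciso hroot ?_ h
  exact { toFun := fun _ => 1, invFun := fun _ => 1,
          left_inv := fun x => Subsingleton.elim _ _,
          right_inv := fun x => Subsingleton.elim _ _,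
          map_mul' := fun _ _ => Subsingleton.elim _ _ }

lemma C_of_injective (hroot : IsRootClass C) {B W : Type u} [Group B] [Group W] (f : B →* W)
    (hf : Function.Injective f) (hW : C W) : C B :=
  Ciso hroot (MonoidHom.ofInjective hf).symm (Csub hroot hW f.range)

lemma Cprod (hroot : IsRootClass C) {G H : Type u} [Group G] [Group H] (hG : C G) (hH : C H) :
    C (G × H) := by
  have e1 : G ≃* ((MonoidHom.snd G H).ker) :=
    { toFun := fun g => ⟨(g, 1), rfl⟩,
      invFun := fun x => x.1.1,
      left_inv := fun g => rfl,
      right_inv := fun x => by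
        ext
        · rfl
        · exact (x.2 : x.1.2 = 1).symm
      map_mul' := fun a b => by ext <;> simp }
  have hker : C ↥((MonoidHom.snd G H).ker) := Ciso hroot e1 hG
  have hsurj : Function.Surjective (MonoidHom.snd G H) := fun y => ⟨(1, y), rfl⟩
  exact Cext hroot (MonoidHom.snd G H).ker hker
    (Ciso hroot (QuotientGroup.quotientKerEquivOfSurjective (MonoidHom.snd G H) hsurj).symm hH)

lemma exists_exponent (hroot : IsRootClass C) (hper : IsPeriodicClass C) {Q : Type u} [Group Q]
    (hQ : C Q) :
    ∃ e : ℕ, 0 < e ∧ (∀ x : Q, x ^ e = 1) ∧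
      ∀ q : ℕ, q.Prime → q ∣ e → q ∈ classPrimes C := by
  have hQQ : C (Q → Q) := Cpow hroot hQ hQ
  set d : Q → Q := fun x => x with hd
  have hfin : IsOfFinOrder d := hper (Q → Q) hQQ d
  refine ⟨orderOf d, hfin.orderOf_pos, fun x => ?_, fun q hq hdvd => ?_⟩
  · have := congrFun (pow_orderOf_eq_one d) x
    simpa [hd] using this
  · exact ⟨hq, Q → Q, inferInstance, hQQ, d, hdvd⟩


lemma CcyclicZMod (hroot : IsRootClass C) (hper : IsPeriodicClass C) :
    ∀ m : ℕ, 0 < m → (∀ q : ℕ, q.Prime → q ∣ m → q ∈ classPrimes C) →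
    C (Multiplicative (ULift.{u} (ZMod m))) := by
  intro m
  induction m using Nat.strong_induction_on with
  | _ m IH =>
  intro hm hprimes
  rcases eq_or_lt_of_le (show 1 ≤ m from hm) with h1 | h2
  · -- m = 1
    haveI : Subsingleton (ZMod m) := by rw [← h1]; infer_instance
    haveI : Subsingleton (Multiplicative (ULift.{u} (ZMod m))) :=
      (Multiplicative.ofAdd.symm : Multiplicative (ULift.{u} (ZMod m)) ≃ _).subsingleton
    exact Ctrivial hroot _
  · -- m ≥ 2
    obtain ⟨q, hq, hqdvd⟩ := Nat.exists_prime_and_dvd (by omega : m ≠ 1)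
    set m' := m / q with hm'
    have hm'dvd : m' ∣ m := Nat.div_dvd_of_dvd hqdvd
    have hm'pos : 0 < m' := Nat.div_pos (Nat.le_of_dvd hm hqdvd) hq.pos
    have hmm : m = m' * q := (Nat.div_mul_cancel hqdvd).symm
    haveI : NeZero m' := ⟨hm'pos.ne'⟩
    haveI : NeZero m := ⟨hm.ne'⟩
    set f₀ : ZMod m →+* ZMod m' := ZMod.castHom hm'dvd (ZMod m') with hf₀
    set f₁ : ULift.{u} (ZMod m) →+ ULift.{u} (ZMod m') :=
      (AddEquiv.ulift.symm.toAddMonoidHom).comp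
        (f₀.toAddMonoidHom.comp AddEquiv.ulift.toAddMonoidHom) with hf₁
    set F : Multiplicative (ULift.{u} (ZMod m)) →* Multiplicative (ULift.{u} (ZMod m')) :=
      AddMonoidHom.toMultiplicative f₁ with hF
    have hFsurj : Function.Surjective F := by
      intro y
      obtain ⟨k, hk⟩ := ZMod.natCast_zmod_surjective (n := m') y.toAdd.down
      refine ⟨Multiplicative.ofAdd (ULift.up ((k : ZMod m))), ?_⟩
      have h1 : F (Multiplicative.ofAdd (ULift.up ((k : ZMod m))))
          = Multiplicative.ofAdd (ULift.up (f₀ ((k : ZMod m)))) := rfl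
      rw [h1, show f₀ ((k : ZMod m)) = ((k : ZMod m')) from map_natCast f₀ k, hk]
      rfl
    have hcard : Nat.card (Multiplicative (ULift.{u} (ZMod m))) = m := by
      rw [Nat.card_congr ((Multiplicative.ofAdd.symm).trans Equiv.ulift)]
      exact Nat.card_zmod m
    have hcardq : Nat.card (Multiplicative (ULift.{u} (ZMod m)) ⧸ F.ker) = m' := by
      rw [Nat.card_congr (QuotientGroup.quotientKerEquivOfSurjective F hFsurj).toEquiv]
      rw [Nat.card_congr ((Multiplicative.ofAdd.symm).trans Equiv.ulift)]
      exact Nat.card_zmod m'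
    have hcardker : Nat.card ↥F.ker = q := by
      have h := Subgroup.card_eq_card_quotient_mul_card_subgroup F.ker
      rw [hcard, hcardq] at h
      exact (Nat.eq_of_mul_eq_mul_left hm'pos (hmm.symm.trans h)).symm
    -- prime order C-group
    obtain ⟨_, G, iG, hG, g, hgdvd⟩ := hprimes q hq hqdvd
    have hgpos : 0 < orderOf g := (hper G hG g).orderOf_pos
    set h := g ^ (orderOf g / q) with hh
    have hdq : (orderOf g / q) ∣ orderOf g := Nat.div_dvd_of_dvd hgdvd
    have hordh : orderOf h = q := by
      rw [hh, orderOf_pow' g (Nat.div_pos (Nat.le_of_dvd hgpos hgdvd) hq.pos).ne']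
      rw [Nat.gcd_eq_right hdq]
      exact Nat.div_div_self hgdvd hgpos.ne'
    have hV : C ↥(Subgroup.zpowers h) := Csub hroot hG (Subgroup.zpowers h)
    have hcardV : Nat.card ↥(Subgroup.zpowers h) = q := by rw [Nat.card_zpowers, hordh]
    haveI : Fact q.Prime := ⟨hq⟩
    have hker : C ↥F.ker := Ciso hroot (mulEquivOfPrimeCardEq hcardV hcardker) hV
    have hquot : C (Multiplicative (ULift.{u} (ZMod m)) ⧸ F.ker) := by
      refine Ciso hroot (QuotientGroup.quotientKerEquivOfSurjective F hFsurj).symm ?_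
      exact IH m' (Nat.div_lt_self hm hq.one_lt) hm'pos
        (fun r hr hrdvd => hprimes r hr (hrdvd.trans hm'dvd))
    exact Cext hroot F.ker hker hquot

lemma exists_hom_zmod_ulift {F : Type u} [CommGroup F] (E : ℕ) (hE : 0 < E)
    (hexp : ∀ x : F, x ^ E = 1) {b : F} (hb : b ≠ 1) :
    ∃ ψ : F →* Multiplicative (ULift.{u} (ZMod E)), ψ b ≠ 1 := by
  haveI : Fact ((0:ℚ) < 1) := ⟨one_pos⟩
  set ξ : AddCircle (1:ℚ) := ((((1:ℕ) : ℚ) / (E : ℚ) * (1:ℚ) : ℚ) : AddCircle (1:ℚ)) with hξ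
  have hord : addOrderOf ξ = E := AddCircle.addOrderOf_div_of_gcd_eq_one hE (Nat.gcd_one_left E)
  have hEξ : (zmultiplesHom (AddCircle (1:ℚ)) ξ) ((E:ℕ) : ℤ) = 0 := by
    have h1 : ((addOrderOf ξ : ℤ)) ∣ (E : ℤ) := by rw [hord]
    simpa using addOrderOf_dvd_iff_zsmul_eq_zero.mp h1
  set ω : ZMod E →+ AddCircle (1:ℚ) := ZMod.lift E ⟨zmultiplesHom _ ξ, hEξ⟩ with hω
  have hωint : ∀ j : ℤ, ω ((j : ZMod E)) = j • ξ := fun j => ZMod.lift_coe E _ j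
  have hωinj : Function.Injective ω := by
    rw [injective_iff_map_eq_zero]
    intro a ha
    obtain ⟨j, rfl⟩ := ZMod.intCast_surjective (n := E) a
    rw [hωint] at ha
    have h2 : ((addOrderOf ξ : ℤ)) ∣ j := addOrderOf_dvd_iff_zsmul_eq_zero.mpr ha
    rw [hord] at h2
    exact (ZMod.intCast_zmod_eq_zero_iff_dvd j E).mpr h2
  have hrange : ∀ x : AddCircle (1:ℚ), E • x = 0 → x ∈ ω.range := by
    intro x hx
    have hfin : IsOfFinAddOrder x := isOfFinAddOrder_iff_nsmul_eq_zero.mpr ⟨E, hE, hx⟩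
    obtain ⟨m, hgcd, hlt, he⟩ := AddCircle.exists_gcd_eq_one_of_isOfFinAddOrder hfin
    set d := addOrderOf x with hd
    have hd0 : 0 < d := hfin.addOrderOf_pos
    have hdE : d ∣ E := addOrderOf_dvd_of_nsmul_eq_zero hx
    obtain ⟨t, ht⟩ := hdE
    have ht0 : 0 < t := by
      rcases Nat.eq_zero_or_pos t with h | h
      · exfalso; rw [h, mul_zero] at ht; omega
      · exact h
    refine ⟨(((m * t : ℕ) : ℤ) : ZMod E), ?_⟩
    rw [hωint]
    rw [← he, hξ]
    rw [← AddCircle.coe_zsmul]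
    congr 1
    have hq : ((d:ℚ)) ≠ 0 := by positivity
    have htq : ((t:ℚ)) ≠ 0 := by positivity
    rw [zsmul_eq_mul]
    push_cast
    rw [ht]
    push_cast
    field_simp
  -- character
  set a : Additive F := Additive.ofMul b with ha
  have ha0 : a ≠ 0 := by
    simpa [ha] using hb
  obtain ⟨c, hc⟩ := CharacterModule.exists_character_apply_ne_zero_of_ne_zero ha0
  set c₀ : Additive F →+ AddCircle (1:ℚ) := AddMonoidHom.mk' (fun x => c x) (map_add c) with hc₀
  have hcr : ∀ x : Additive F, c₀ x ∈ ω.range := by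
    intro x
    refine hrange _ ?_
    rw [← map_nsmul]
    have hx0 : (E : ℕ) • x = 0 := by
      rw [show x = Additive.ofMul (Additive.toMul x) from rfl, ← ofMul_pow, hexp]
      rfl
    rw [hx0, map_zero]
  set θ := AddMonoidHom.ofInjective hωinj with hθ
  set ψ₀ : Additive F →+ ZMod E :=
    (θ.symm.toAddMonoidHom).comp (c₀.codRestrict ω.range hcr) with hψ₀
  have hψ₀a : ψ₀ a ≠ 0 := by
    intro h
    have h1 : θ (ψ₀ a) = θ 0 := by rw [h]
    rw [hψ₀] at h1
    simp only [AddMonoidHom.coe_comp, Function.comp_apply, AddEquiv.coe_toAddMonoidHom,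
      AddEquiv.apply_symm_apply, map_zero] at h1
    have : c₀ a = 0 := by
      have := congrArg (Subtype.val) h1
      simpa using this
    exact hc (by simpa [hc₀] using this)
  refine ⟨MonoidHom.mk' (fun x => Multiplicative.ofAdd (AddEquiv.ulift.symm
      (ψ₀ (Additive.ofMul x)))) ?_, ?_⟩
  · intro x y
    show Multiplicative.ofAdd (AddEquiv.ulift.symm (ψ₀ (Additive.ofMul (x * y)))) = _
    rw [show Additive.ofMul (x * y) = Additive.ofMul x + Additive.ofMul y from rfl,
      map_add, map_add, ofAdd_add]
  · intro h
    simp only [MonoidHom.mk'_apply] at h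
    rw [show (1 : Multiplicative (ULift.{u} (ZMod E))) = Multiplicative.ofAdd 0 from rfl] at h
    have h2 := Multiplicative.ofAdd.injective h
    have h3 : ψ₀ (Additive.ofMul b) = 0 := by
      have := congrArg (AddEquiv.ulift (α := ZMod E)) h2
      simpa using this
    exact hψ₀a (by rw [← ha] at h3; exact h3)


def cardBoundAt (C : GroupClass.{u}) (B : Type u) [Group B] (p : ℕ) : Prop :=
  ∃ (G : Type u) (_ : Group G), C G ∧
    Cardinal.mk {x : B // ∃ n : ℕ, x ^ p ^ n = 1} ≤ Cardinal.mk G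

lemma exists_card_bound (hroot : IsRootClass C) :
    ∀ E : ℕ, 0 < E → ∀ (F : Type u) (_ : CommGroup F), (∀ x : F, x ^ E = 1) →
    (∀ p : ℕ, p.Prime → p ∣ E → cardBoundAt C F p) →
    ∃ (G : Type u) (_ : Group G), C G ∧ Cardinal.mk F ≤ Cardinal.mk G := by
  intro E
  induction E using Nat.strong_induction_on with
  | _ E IH =>
  intro hE F iF hexp hcard
  rcases eq_or_lt_of_le (show 1 ≤ E from hE) with h1 | h2
  · -- E = 1
    obtain ⟨G₀, iG₀, hG₀, _⟩ := hroot.2.1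
    refine ⟨G₀, iG₀, hG₀, ?_⟩
    haveI : Subsingleton F := ⟨fun x y => by
      have hx := hexp x; have hy := hexp y
      rw [← h1, pow_one] at hx hy; rw [hx, hy]⟩
    calc Cardinal.mk F ≤ 1 := Cardinal.le_one_iff_subsingleton.mpr inferInstance
    _ ≤ Cardinal.mk G₀ := Cardinal.one_le_iff_ne_zero.mpr (Cardinal.mk_ne_zero G₀)
  · obtain ⟨q, hq, hqdvd⟩ := Nat.exists_prime_and_dvd (by omega : E ≠ 1)
    set v := E.factorization q with hv
    set c := E / q ^ v with hc
    have hEne : E ≠ 0 := by omega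
    have hproj : q ^ v * c = E := Nat.ordProj_mul_ordCompl_eq_self E q
    have hvpos : 0 < v := by
      rw [hv]
      exact (Nat.Prime.factorization_pos_of_dvd hq hEne hqdvd)
    have hqv1 : 1 < q ^ v := by
      calc 1 < q := hq.one_lt
      _ ≤ q ^ v := Nat.le_self_pow hvpos.ne' q
    have hcpos : 0 < c := Nat.ordCompl_pos q hEne
    rcases eq_or_lt_of_le (show 1 ≤ c from hcpos) with hc1 | hc2
    · -- E = q ^ v, pure prime power
      have hc1' : c = 1 := by omega
      have hEq : E = q ^ v := by rw [← hproj, hc1', mul_one]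
      obtain ⟨G, iG, hG, hle⟩ := hcard q hq hqdvd
      refine ⟨G, iG, hG, le_trans ?_ hle⟩
      have e : F ≃ {x : F // ∃ n : ℕ, x ^ q ^ n = 1} :=
        (Equiv.subtypeUnivEquiv (fun x => ⟨v, by rw [← hEq]; exact hexp x⟩)).symm
      exact le_of_eq (Cardinal.mk_congr e)
    · -- composite
      have hqvdvd : q ^ v ∣ E := Nat.ordProj_dvd E q
      have hcdvd : c ∣ E := Nat.ordCompl_dvd E q
      have hqvlt : q ^ v < E := by nlinarith
      have hclt : c < E := by nlinarith
      have hcop : Nat.Coprime (q ^ v) c := (Nat.coprime_ordCompl hq hEne).pow_left v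
      set K₁ := (powMonoidHom (q ^ v) : F →* F).ker with hK₁
      set K₂ := (powMonoidHom c : F →* F).ker with hK₂
      set Φ : F →* ↥K₁ × ↥K₂ :=
        { toFun := fun x => (⟨x ^ c, by
              simp only [hK₁, MonoidHom.mem_ker, powMonoidHom_apply, ← pow_mul]
              rw [mul_comm c (q^v), hproj]; exact hexp x⟩,
            ⟨x ^ (q ^ v), by
              simp only [hK₂, MonoidHom.mem_ker, powMonoidHom_apply, ← pow_mul]
              rw [hproj]; exact hexp x⟩),
          map_one' := by ext <;> simp
          map_mul' := fun x y => by ext <;> simp [mul_pow] } with hΦ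
      have hΦinj : Function.Injective Φ := by
        rw [injective_iff_map_eq_one]
        intro x hx
        have h1 : x ^ c = 1 := congrArg (Subtype.val ∘ Prod.fst) hx
        have h2 : x ^ (q ^ v) = 1 := congrArg (Subtype.val ∘ Prod.snd) hx
        have hd1 : orderOf x ∣ c := orderOf_dvd_of_pow_eq_one h1
        have hd2 : orderOf x ∣ q ^ v := orderOf_dvd_of_pow_eq_one h2
        have hdd : orderOf x ∣ 1 := by
          have := Nat.dvd_gcd hd2 hd1
          rwa [Nat.Coprime.gcd_eq_one hcop] at this
        rw [← orderOf_eq_one_iff]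
        exact Nat.dvd_one.mp hdd
      -- cardBound transfer to subgroups
      have hsub : ∀ (K : Subgroup F) (p : ℕ), p.Prime → p ∣ E → cardBoundAt C ↥K p := by
        intro K p hp hpdvd
        obtain ⟨G, iG, hG, hle⟩ := hcard p hp hpdvd
        refine ⟨G, iG, hG, le_trans ?_ hle⟩
        refine Cardinal.mk_le_of_injective (f := fun y =>
          (⟨(y.1 : F), by obtain ⟨n, hn⟩ := y.2; exact ⟨n, by
              have := congrArg (Subgroup.subtype K) hn
              simpa using this⟩⟩ : {x : F // ∃ n : ℕ, x ^ p ^ n = 1})) ?_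
        intro y₁ y₂ h
        have := congrArg Subtype.val h
        exact Subtype.ext (Subtype.ext this)
      obtain ⟨G₁, iG₁, hG₁, hle₁⟩ := IH (q ^ v) hqvlt (by positivity) ↥K₁ inferInstance
        (fun y => Subtype.ext (by
          have h : ((y : F)) ^ (q ^ v) = 1 := y.2
          simpa using h))
        (fun p hp hpdvd => hsub K₁ p hp (hpdvd.trans hqvdvd))
      obtain ⟨G₂, iG₂, hG₂, hle₂⟩ := IH c hclt hcpos ↥K₂ inferInstance
        (fun y => Subtype.ext (by
          have h : ((y : F)) ^ c = 1 := y.2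
          simpa using h))
        (fun p hp hpdvd => hsub K₂ p hp (hpdvd.trans hcdvd))
      refine ⟨G₁ × G₂, inferInstance, Cprod hroot hG₁ hG₂, ?_⟩
      calc Cardinal.mk F ≤ Cardinal.mk (↥K₁ × ↥K₂) := Cardinal.mk_le_of_injective hΦinj
      _ = Cardinal.mk ↥K₁ * Cardinal.mk ↥K₂ := by rw [Cardinal.mk_prod]; simp
      _ ≤ Cardinal.mk G₁ * Cardinal.mk G₂ := mul_le_mul' hle₁ hle₂
      _ = Cardinal.mk (G₁ × G₂) := by rw [Cardinal.mk_prod]; simp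

lemma C_of_bounded_abelian (hroot : IsRootClass C) (hper : IsPeriodicClass C)
    (F : Type u) [CommGroup F] (E : ℕ) (hE : 0 < E)
    (hprimes : ∀ q : ℕ, q.Prime → q ∣ E → q ∈ classPrimes C)
    (hexp : ∀ x : F, x ^ E = 1)
    (hcard : ∀ p : ℕ, p.Prime → p ∣ E → cardBoundAt C F p) : C F := by
  classical
  obtain ⟨G₀, iG₀, hG₀, hle⟩ := exists_card_bound hroot E hE F inferInstance hexp hcard
  set W := Multiplicative (ULift.{u} (ZMod E)) with hW
  have hCW : C W := CcyclicZMod hroot hper E hE hprimes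
  have hψ : ∀ b : {b : F // b ≠ 1}, ∃ ψ : F →* W, ψ b.1 ≠ 1 :=
    fun b => exists_hom_zmod_ulift E hE hexp b.2
  choose ψfun hψfun using hψ
  set Ψ : F →* (F → W) :=
    { toFun := fun x => fun b => if h : b = 1 then 1 else ψfun ⟨b, h⟩ x,
      map_one' := by
        funext b
        by_cases h : b = 1 <;> simp [h]
      map_mul' := fun x y => by
        funext b
        by_cases h : b = 1 <;> simp [h] } with hΨ
  have hΨinj : Function.Injective Ψ := by
    rw [injective_iff_map_eq_one]
    intro x hx
    by_contra hx1
    have := congrFun hx x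
    rw [hΨ] at this
    simp only [MonoidHom.coe_mk, OneHom.coe_mk, dif_neg hx1] at this
    exact hψfun ⟨x, hx1⟩ this
  obtain ⟨ι⟩ := Cardinal.le_def F G₀ |>.mp hle
  set Θ : (F → W) →* (G₀ → W) :=
    { toFun := fun f => fun g => if h : ∃ b : F, ι b = g then f h.choose else 1,
      map_one' := by
        funext g
        by_cases h : ∃ b : F, ι b = g <;> simp [h]
      map_mul' := fun f₁ f₂ => by
        funext g
        by_cases h : ∃ b : F, ι b = g <;> simp [h] } with hΘ
  have hΘinj : Function.Injective Θ := by
    intro f₁ f₂ h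
    funext b
    have h1 := congrFun h (ι b)
    have hex : ∃ b' : F, ι b' = ι b := ⟨b, rfl⟩
    rw [hΘ] at h1
    simp only [MonoidHom.coe_mk, OneHom.coe_mk, dif_pos hex] at h1
    have hch : hex.choose = b := ι.injective hex.choose_spec
    rwa [hch] at h1
  exact C_of_injective hroot (Θ.comp Ψ) (hΘinj.comp hΨinj) (Cpow hroot hCW hG₀)


def BdAt (C : GroupClass.{u}) (p : ℕ) (B : Type u) [Group B] : Prop :=
  (∃ e : ℕ, 0 < e ∧ ∀ x : B, (∃ n : ℕ, x ^ p ^ n = 1) → x ^ e = 1) ∧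
    ∃ (G : Type u) (_ : Group G), C G ∧
      Cardinal.mk {x : B // ∃ n : ℕ, x ^ p ^ n = 1} ≤ Cardinal.mk G

lemma subgroupOf_normal_of_comm {T : Type u} [Group T] {K1 K2 : Subgroup T}
    (hcomm : ∀ x ∈ K2, ∀ y ∈ K2, x * y * x⁻¹ * y⁻¹ ∈ K1) (hle : K1 ≤ K2) :
    (K1.subgroupOf K2).Normal := by
  constructor
  intro n hn g
  have h1 : (g : T) * (n : T) * (g : T)⁻¹ * (n : T)⁻¹ ∈ K1 := hcomm _ g.2 _ n.2
  have h2 : (n : T) ∈ K1 := hn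
  show ((g * n * g⁻¹ : ↥K2) : T) ∈ K1
  have h3 : ((g * n * g⁻¹ : ↥K2) : T) = ((g : T) * (n : T) * (g : T)⁻¹ * (n : T)⁻¹) * (n : T) := by
    push_cast
    group
  rw [h3]
  exact K1.mul_mem h1 h2

/-- The quotient of `K2` by `K1` is commutative when commutators land in `K1`. -/
@[reducible]
noncomputable def commGroupOfFactor {T : Type u} [Group T] {K1 K2 : Subgroup T}
    (hcomm : ∀ x ∈ K2, ∀ y ∈ K2, x * y * x⁻¹ * y⁻¹ ∈ K1) (hle : K1 ≤ K2)
    (hN : (K1.subgroupOf K2).Normal) :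
    letI := hN
    CommGroup (↥K2 ⧸ K1.subgroupOf K2) := by
  letI := hN
  refine { (inferInstance : Group (↥K2 ⧸ K1.subgroupOf K2)) with mul_comm := ?_ }
  intro a b
  induction a using QuotientGroup.induction_on with | H x =>
  induction b using QuotientGroup.induction_on with | H y =>
  rw [← QuotientGroup.mk_mul, ← QuotientGroup.mk_mul]
  rw [QuotientGroup.eq]
  rw [Subgroup.mem_subgroupOf]
  have : (((x * y)⁻¹ * (y * x) : ↥K2) : T)
      = (y : T)⁻¹ * (x : T)⁻¹ * (y : T) * (x : T) := by
    push_cast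
    group
  rw [this]
  have := hcomm _ (K2.inv_mem y.2) _ (K2.inv_mem x.2)
  simpa using this

lemma factor_setup {C : GroupClass.{u}} {T T' : Type u} [Group T] [Group T'] (q : T →* T')
    (K1 K2 : Subgroup T) (hle : K1 ≤ K2)
    (hcomm : ∀ x ∈ K2, ∀ y ∈ K2, x * y * x⁻¹ * y⁻¹ ∈ K1)
    (hB : ∀ hN : (K1.subgroupOf K2).Normal, (letI := hN;
        Bounded C (↥K2 ⧸ K1.subgroupOf K2))) :
    ∃ (B : Type u) (_ : CommGroup B) (φ : ↥(K2.map q) →* B),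
      Function.Surjective φ ∧ (∀ x : ↥(K2.map q), φ x = 1 ↔ (x : T') ∈ K1.map q) ∧
      (∀ p ∈ classPrimes C, BdAt C p B) := by
  classical
  haveI hN : (K1.subgroupOf K2).Normal := subgroupOf_normal_of_comm hcomm hle
  letI iA : CommGroup (↥K2 ⧸ K1.subgroupOf K2) := commGroupOfFactor hcomm hle hN
  have hBA : Bounded C (↥K2 ⧸ K1.subgroupOf K2) := hB hN
  set χ : ↥K2 →* ↥(K2.map q) := q.subgroupMap K2 with hχdef
  have hχ : Function.Surjective χ := q.subgroupMap_surjective K2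
  set ρ : ↥K2 →* (↥K2 ⧸ K1.subgroupOf K2) := QuotientGroup.mk' (K1.subgroupOf K2) with hρdef
  set U : Subgroup ↥K2 := (K1.map q).comap (q.comp K2.subtype) with hUdef
  set K : Subgroup (↥K2 ⧸ K1.subgroupOf K2) := U.map ρ with hKdef
  set B := (↥K2 ⧸ K1.subgroupOf K2) ⧸ K with hBdef
  set φ'' : ↥K2 →* B := (QuotientGroup.mk' K).comp ρ with hφ''def
  have hUker : ρ.ker ≤ U := by
    intro y hy
    rw [hρdef, QuotientGroup.ker_mk'] at hy
    show q (K2.subtype y) ∈ K1.map q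
    exact Subgroup.mem_map_of_mem q (Subgroup.mem_subgroupOf.mp hy)
  have hkerle : χ.ker ≤ φ''.ker := by
    intro x hx
    rw [MonoidHom.mem_ker] at hx ⊢
    have hx1 : q x = 1 := by
      have h0 : (χ x : T') = q x := rfl
      rw [← h0, hx]
      rfl
    have hxU : x ∈ U := by
      show q (K2.subtype x) ∈ K1.map q
      have : q (K2.subtype x) = q x := rfl
      rw [this, hx1]
      exact (K1.map q).one_mem
    exact (QuotientGroup.eq_one_iff (ρ x)).mpr (Subgroup.mem_map_of_mem ρ hxU)
  set φ : ↥(K2.map q) →* B :=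
    (χ.liftOfRightInverse (Function.surjInv hχ) (Function.rightInverse_surjInv hχ))
      ⟨φ'', hkerle⟩ with hφdef
  have hφχ : ∀ x : ↥K2, φ (χ x) = φ'' x := fun x =>
    χ.liftOfRightInverse_comp_apply _ _ ⟨φ'', hkerle⟩ x
  have hφsurj : Function.Surjective φ := by
    intro b
    obtain ⟨a, rfl⟩ := QuotientGroup.mk'_surjective K b
    obtain ⟨x, rfl⟩ := QuotientGroup.mk'_surjective (K1.subgroupOf K2) a
    exact ⟨χ x, hφχ x⟩
  refine ⟨B, inferInstance, φ, hφsurj, ?_, fun p hp => hBA K p hp⟩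
  intro xb
  obtain ⟨x, rfl⟩ := hχ xb
  rw [hφχ]
  have hcoe : ((χ x : ↥(K2.map q)) : T') = q x := rfl
  constructor
  · intro h
    have hx : ρ x ∈ K := by
      rw [hφ''def] at h
      exact (QuotientGroup.eq_one_iff _).mp h
    have hmem : x ∈ U ⊔ ρ.ker := by
      rw [← Subgroup.comap_map_eq ρ U]
      exact hx
    rw [sup_of_le_left hUker] at hmem
    rw [hcoe]
    exact hmem
  · intro h
    have hxU : x ∈ U := by
      show q (K2.subtype x) ∈ K1.map q
      rw [show q (K2.subtype x) = q x from rfl]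
      rw [hcoe] at h
      exact h
    exact (QuotientGroup.eq_one_iff (ρ x)).mpr (Subgroup.mem_map_of_mem ρ hxU)

lemma commutator_pow_central {G : Type u} [Group G] (z y : G)
    (hz : ∀ w : G, z * w * z⁻¹ * w⁻¹ ∈ Subgroup.center G) :
    ∀ k : ℕ, z ^ k * y * (z ^ k)⁻¹ * y⁻¹ = (z * y * z⁻¹ * y⁻¹) ^ k := by
  intro k
  induction k with
  | zero => simp
  | succ k IH =>
    have hc : z * y * z⁻¹ * y⁻¹ ∈ Subgroup.center G := hz y
    have hck : (z * y * z⁻¹ * y⁻¹) ^ k ∈ Subgroup.center G := Subgroup.pow_mem _ hc k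
    have h1 : z ^ k * y * (z ^ k)⁻¹ = (z * y * z⁻¹ * y⁻¹) ^ k * y := by
      calc z ^ k * y * (z ^ k)⁻¹ = (z ^ k * y * (z ^ k)⁻¹ * y⁻¹) * y := by group
      _ = (z * y * z⁻¹ * y⁻¹) ^ k * y := by rw [IH]
    have hcom : z * (z * y * z⁻¹ * y⁻¹) ^ k = (z * y * z⁻¹ * y⁻¹) ^ k * z :=
      (Subgroup.mem_center_iff.mp hck z)
    calc z ^ (k+1) * y * (z ^ (k+1))⁻¹ * y⁻¹
        = z * (z ^ k * y * (z ^ k)⁻¹) * z⁻¹ * y⁻¹ := by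
          rw [pow_succ']
          group
    _ = z * ((z * y * z⁻¹ * y⁻¹) ^ k * y) * z⁻¹ * y⁻¹ := by rw [h1]
    _ = (z * (z * y * z⁻¹ * y⁻¹) ^ k) * y * z⁻¹ * y⁻¹ := by group
    _ = ((z * y * z⁻¹ * y⁻¹) ^ k * z) * y * z⁻¹ * y⁻¹ := by rw [hcom]
    _ = (z * y * z⁻¹ * y⁻¹) ^ k * (z * y * z⁻¹ * y⁻¹) := by group
    _ = (z * y * z⁻¹ * y⁻¹) ^ (k + 1) := by rw [pow_succ]

lemma center_quotient_exp {G : Type u} [Group G] (g : ℕ)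
    (hg : ∀ z ∈ Subgroup.center G, z ^ g = 1) :
    ∀ z ∈ Subgroup.center (G ⧸ Subgroup.center G), z ^ g = 1 := by
  intro zq hzq
  obtain ⟨z, rfl⟩ := QuotientGroup.mk'_surjective _ zq
  have hz : ∀ w : G, z * w * z⁻¹ * w⁻¹ ∈ Subgroup.center G := by
    intro w
    have hcw := Subgroup.mem_center_iff.mp hzq ((QuotientGroup.mk' _) w)
    rw [← QuotientGroup.eq_one_iff (z * w * z⁻¹ * w⁻¹)]
    have : (QuotientGroup.mk' (Subgroup.center G)) (z * w * z⁻¹ * w⁻¹)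
        = (QuotientGroup.mk' _ z) * (QuotientGroup.mk' _ w) * (QuotientGroup.mk' _ z)⁻¹
          * (QuotientGroup.mk' _ w)⁻¹ := by
      simp [map_mul]
    show (QuotientGroup.mk' (Subgroup.center G)) (z * w * z⁻¹ * w⁻¹) = 1
    rw [this, ← hcw]
    group
  have hzg : (z ^ g) ∈ Subgroup.center G := by
    rw [Subgroup.mem_center_iff]
    intro w
    have h1 : z ^ g * w * (z ^ g)⁻¹ * w⁻¹ = (z * w * z⁻¹ * w⁻¹) ^ g :=
      commutator_pow_central z w hz g
    have h2 : (z * w * z⁻¹ * w⁻¹) ^ g = 1 := hg _ (hz w)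
    rw [h2] at h1
    calc w * z ^ g = (z ^ g * w * (z ^ g)⁻¹ * w⁻¹)⁻¹ * (z ^ g * w) := by group
    _ = z ^ g * w := by rw [h1]; group
  show (QuotientGroup.mk' (Subgroup.center G) z) ^ g = 1
  rw [← map_pow]
  exact (QuotientGroup.eq_one_iff _).mpr hzg

lemma ucs_exponent : ∀ (i : ℕ) (G : Type u) (_ : Group G) (g : ℕ),
    (∀ z ∈ Subgroup.center G, z ^ g = 1) →
    ∀ x ∈ upperCentralSeries G i, x ^ g ^ i = 1 := by
  intro i
  induction i with
  | zero =>
    intro G _ g hg x hx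
    have hx : x ∈ (⊥ : Subgroup G) := hx
    rw [Subgroup.mem_bot] at hx
    simp [hx]
  | succ i IH =>
    intro G _ g hg x hx
    change x ∈ Subgroup.upperCentralSeries G (i+1) at hx
    rw [← comap_upperCentralSeries_quotient_center i] at hx
    have hx' : (QuotientGroup.mk' (Subgroup.center G)) x
        ∈ upperCentralSeries (G ⧸ Subgroup.center G) i := hx
    have h1 := IH (G ⧸ Subgroup.center G) inferInstance g (center_quotient_exp g hg) _ hx'
    rw [← map_pow] at h1
    have h2 : x ^ g ^ i ∈ Subgroup.center G := (QuotientGroup.eq_one_iff _).mp h1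
    have h3 := hg _ h2
    rw [pow_succ, pow_mul]
    exact h3

lemma isOfFinOrder_of_zpow_eq_one {G : Type u} [Group G] (z : G) (n : ℤ) (hn : n ≠ 0)
    (h : z ^ n = 1) : IsOfFinOrder z := by
  refine isOfFinOrder_iff_pow_eq_one.mpr ⟨n.natAbs, Int.natAbs_pos.mpr hn, ?_⟩
  rcases Int.natAbs_eq n with h1 | h1
  · rw [← zpow_natCast, ← h1, h]
  · rw [← zpow_natCast, ← neg_neg ((n.natAbs : ℤ)), ← h1, zpow_neg, h, inv_one]

lemma central_zpowers_normal {G : Type u} [Group G] {z : G} (hz : z ∈ Subgroup.center G) :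
    (Subgroup.zpowers z).Normal := by
  constructor
  intro nn hnn gg
  have hcen : nn ∈ Subgroup.center G := Subgroup.zpowers_le.mpr hz hnn
  have := (Subgroup.mem_center_iff.mp hcen gg).symm
  have h2 : gg * nn * gg⁻¹ = nn := by
    rw [Subgroup.mem_center_iff.mp hcen gg]
    group
  rw [h2]
  exact hnn


end Aux

/-- `X` is `C`-regular with respect to its normal subgroup `Y`: for any subgroup `M ≤ Y`
normal in `X` with `Y/M ∈ C` there is a normal subgroup `N` of `X` with `X/N ∈ C` and
`N ∩ Y = M`. -/
def RegularWrt (C : GroupClass.{u}) {X : Type u} [Group X] (Y : Subgroup X) : Prop :=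
  ∀ (M : Subgroup X) (_ : M.Normal), M ≤ Y → C (↥Y ⧸ M.subgroupOf Y) →
    ∃ (N : Subgroup X) (_ : N.Normal), C (X ⧸ N) ∧ N ⊓ Y = M

/-- Proposition 6.3(2): if `Y` is a normal subgroup of `X` and there is a
homomorphism `σ` of `X` onto a `C`-bounded nilpotent group injective on `Y`, then for any
subgroup `M ≤ Y` normal in `X` with `Y/M ∈ C` there is a normal subgroup `N` of `X` with
`X/N` a nilpotent `C`-group and `N ∩ Y = M`; in particular, `X` is `C`-regular with respect
to `Y`. -/
theorem statement18 (C : GroupClass.{u}) (hroot : IsRootClass C) (hper : IsPeriodicClass C)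
    (X : Type u) [Group X] (Y : Subgroup X) (hY : Y.Normal)
    (T : Type u) [Group T] (σ : X →* T) (hsurj : Function.Surjective σ)
    (hT : BoundedNilpotent C T) (hinj : Set.InjOn σ (Y : Set X)) :
    (∀ (M : Subgroup X) (_ : M.Normal), M ≤ Y → C (↥Y ⧸ M.subgroupOf Y) →
      ∃ (N : Subgroup X) (_ : N.Normal), NilpClass C (X ⧸ N) ∧ N ⊓ Y = M) ∧
    RegularWrt C Y := by
  classical
  obtain ⟨n, H, h0, hn, hle, hcommT, hbd⟩ := hT
  have main : ∀ (M : Subgroup X) (_ : M.Normal), M ≤ Y → C (↥Y ⧸ M.subgroupOf Y) →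
      ∃ (N : Subgroup X) (_ : N.Normal), NilpClass C (X ⧸ N) ∧ N ⊓ Y = M := by
    intro M hM hMY hQ
    obtain ⟨e, he0, heexp, heprimes⟩ := exists_exponent hroot hper hQ
    set YT := Y.map σ with hYTdef
    set MT := M.map σ with hMTdef
    have hMTYT : MT ≤ YT := Subgroup.map_mono hMY
    have hMTnormal : MT.Normal := Subgroup.Normal.map hM σ hsurj
    set 𝒮 : Set (Subgroup T) := {S | S.Normal ∧ S ⊓ YT = MT} with h𝒮def
    have hMT𝒮 : MT ∈ 𝒮 := ⟨hMTnormal, inf_eq_left.mpr hMTYT⟩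
    have hchain : ∀ c ⊆ 𝒮, IsChain (· ≤ ·) c → ∀ y ∈ c, ∃ ub ∈ 𝒮, ∀ z ∈ c, z ≤ ub := by
      intro c hc𝒮 hcc y hyc
      haveI : Nonempty c := ⟨⟨y, hyc⟩⟩
      have hdir : Directed (· ≤ ·) (fun S : c => (S : Subgroup T)) := by
        intro a b
        rcases eq_or_ne a.1 b.1 with h | h
        · exact ⟨b, le_of_eq h, le_rfl⟩
        · rcases hcc a.2 b.2 h with h1 | h1
          · exact ⟨b, h1, le_rfl⟩
          · exact ⟨a, le_rfl, h1⟩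
      set U : Subgroup T := ⨆ S : c, (S : Subgroup T) with hUdef
      have hmemU : ∀ x : T, x ∈ U ↔ ∃ S : c, x ∈ (S : Subgroup T) :=
        fun x => Subgroup.mem_iSup_of_directed hdir
      have hUnormal : U.Normal := by
        constructor
        intro x hx gg
        obtain ⟨S, hxS⟩ := (hmemU x).mp hx
        exact (hmemU _).mpr ⟨S, ((hc𝒮 S.2).1).conj_mem x hxS gg⟩
      have hUint : U ⊓ YT = MT := by
        apply le_antisymm
        · intro x hx
          obtain ⟨hxU, hxY⟩ := Subgroup.mem_inf.mp hx
          obtain ⟨S, hxS⟩ := (hmemU x).mp hxU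
          rw [← (hc𝒮 S.2).2]
          exact Subgroup.mem_inf.mpr ⟨hxS, hxY⟩
        · have hMTy : MT ≤ y := by
            rw [← (hc𝒮 hyc).2]; exact inf_le_left
          exact le_inf (le_trans hMTy (le_iSup (fun S : c => (S : Subgroup T)) ⟨y, hyc⟩)) hMTYT
      exact ⟨U, ⟨hUnormal, hUint⟩, fun z hz => le_iSup (fun S : c => (S : Subgroup T)) ⟨z, hz⟩⟩
    obtain ⟨S, hMTS', hSmax⟩ := zorn_le_nonempty₀ 𝒮 hchain MT hMT𝒮
    haveI hSnormal : S.Normal := hSmax.1.1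
    have hSint : S ⊓ YT = MT := hSmax.1.2
    have hMTS : MT ≤ S := hMTS'
    set qh : T →* T ⧸ S := QuotientGroup.mk' S with hqhdef
    have hqsurj : Function.Surjective qh := QuotientGroup.mk'_surjective S
    set Hb : ℕ → Subgroup (T ⧸ S) := fun i => (H i).map qh with hHbdef
    set Yb : Subgroup (T ⧸ S) := YT.map qh with hYbdef
    have hYbexp : ∀ w ∈ Yb, w ^ e = 1 := by
      intro w hw
      obtain ⟨t, htY, rfl⟩ := hw
      obtain ⟨y, hyY, rfl⟩ := htY
      have h1 : (QuotientGroup.mk' (M.subgroupOf Y) ⟨y, hyY⟩) ^ e = 1 := heexp _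
      rw [← map_pow] at h1
      have h2 := (QuotientGroup.eq_one_iff _).mp h1
      have h3 := Subgroup.mem_subgroupOf.mp h2
      have hyeM : y ^ e ∈ M := by simpa using h3
      have hts : σ (y ^ e) ∈ S := hMTS (Subgroup.mem_map_of_mem σ hyeM)
      rw [← map_pow, ← map_pow]
      exact (QuotientGroup.eq_one_iff _).mpr hts
    have hEss : ∀ L : Subgroup (T ⧸ S), L.Normal → L ≠ ⊥ →
        ∃ w, w ∈ L ⊓ Yb ∧ w ≠ 1 := by
      intro L hLN hLbot
      set L' := L.comap qh with hL'def
      have hSL' : S ≤ L' := by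
        intro s hs
        show qh s ∈ L
        have h1 : qh s = 1 := (QuotientGroup.eq_one_iff s).mpr hs
        rw [h1]; exact L.one_mem
      have hne : L' ⊓ YT ≠ MT := by
        intro heq
        have hL'𝒮 : L' ∈ 𝒮 := ⟨hLN.comap qh, heq⟩
        have hle' : L' ≤ S := hSmax.2 hL'𝒮 hSL'
        apply hLbot
        ext xb
        simp only [Subgroup.mem_bot]
        constructor
        · intro hxb
          obtain ⟨x, rfl⟩ := hqsurj xb
          exact (QuotientGroup.eq_one_iff x).mpr (hle' hxb)
        · rintro rfl; exact L.one_mem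
      have hMTle : MT ≤ L' ⊓ YT := le_inf (le_trans hMTS hSL') hMTYT
      have hex : ∃ y, y ∈ L' ⊓ YT ∧ y ∉ MT := by
        by_contra hcon
        push_neg at hcon
        exact hne (le_antisymm (fun y hy => hcon y hy) hMTle)
      obtain ⟨y, hy, hyM⟩ := hex
      refine ⟨qh y, Subgroup.mem_inf.mpr ⟨Subgroup.mem_comap.mp (Subgroup.mem_inf.mp hy).1,
        Subgroup.mem_map_of_mem qh (Subgroup.mem_inf.mp hy).2⟩, ?_⟩
      intro h1
      have h2 : y ∈ S := (QuotientGroup.eq_one_iff y).mp h1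
      exact hyM (by rw [← hSint]; exact Subgroup.mem_inf.mpr ⟨h2, (Subgroup.mem_inf.mp hy).2⟩)
    have hHb0 : Hb 0 = ⊥ := by
      show (H 0).map qh = ⊥
      rw [h0]
      exact Subgroup.map_bot qh
    have hHbtop : Hb n = ⊤ := by
      show (H n).map qh = ⊤
      rw [hn]
      exact Subgroup.map_top_of_surjective qh hqsurj
    have hHble : ∀ i, Hb i ≤ Hb (i+1) := fun i => Subgroup.map_mono (hle i)
    have hHbcomm : ∀ i, ∀ x ∈ Hb (i+1), ∀ gb : T ⧸ S, x * gb * x⁻¹ * gb⁻¹ ∈ Hb i := by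
      intro i x hx gb
      obtain ⟨x0, hx0, rfl⟩ := hx
      obtain ⟨g0, rfl⟩ := hqsurj gb
      have h1 := hcommT i x0 hx0 g0
      have h2 : qh x0 * qh g0 * (qh x0)⁻¹ * (qh g0)⁻¹ = qh (x0 * g0 * x0⁻¹ * g0⁻¹) := by
        simp [map_mul, map_inv]
      rw [h2]
      exact Subgroup.mem_map_of_mem qh h1
    have hfd : ∀ i : ℕ, ∃ (B : Type u) (_ : CommGroup B) (φ : ↥((H (i+1)).map qh) →* B),
        Function.Surjective φ ∧
        (∀ x : ↥((H (i+1)).map qh), φ x = 1 ↔ ((x : T ⧸ S) ∈ (H i).map qh)) ∧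
        (∀ p ∈ classPrimes C, BdAt C p B) :=
      fun i => factor_setup qh (H i) (H (i+1)) (hle i)
        (fun x hx y _ => hcommT i x hx y)
        (fun hN => hbd i hN)
    choose Bf iBf φf hφsurj hφker hφBd using hfd
    have hD : ∀ p, p ∈ classPrimes C → ∃ fp : ℕ, 0 < fp ∧
        ∀ t : T ⧸ S, (∃ a : ℕ, t ^ p ^ a = 1) → t ^ fp = 1 := by
      intro p hp
      have hei : ∀ i : ℕ, ∃ ei : ℕ, 0 < ei ∧
          ∀ b : Bf i, (∃ a : ℕ, b ^ p ^ a = 1) → b ^ ei = 1 := by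
        intro i
        letI := iBf i
        exact (hφBd i p hp).1
      choose ei hei0 heikill using hei
      have key : ∀ j, ∀ t : T ⧸ S, t ∈ Hb j → (∃ a : ℕ, t ^ p ^ a = 1) →
          t ^ (∏ i ∈ Finset.range j, ei i) = 1 := by
        intro j
        induction j with
        | zero =>
          intro t ht _
          rw [hHb0, Subgroup.mem_bot] at ht
          simp [ht]
        | succ j IH =>
          rintro t ht ⟨a, ha⟩
          letI := iBf j
          have htj : t ∈ (H (j+1)).map qh := ht
          set xt : ↥((H (j+1)).map qh) := ⟨t, htj⟩ with hxtdef
          have hxtpow : xt ^ p ^ a = 1 := by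
            have hco : ((xt ^ p ^ a : ↥((H (j+1)).map qh)) : T ⧸ S) = 1 := by
              push_cast
              exact ha
            exact_mod_cast (OneMemClass.coe_eq_one).mp hco
          have h2 : (φf j xt) ^ ei j = 1 := by
            refine heikill j _ ⟨a, ?_⟩
            rw [← map_pow, hxtpow, map_one]
          rw [← map_pow] at h2
          have h3 : ((xt ^ ei j : ↥((H (j+1)).map qh)) : T ⧸ S) ∈ (H j).map qh :=
            (hφker j _).mp h2
          have h4 : (t ^ ei j) ∈ Hb j := by
            have hco : ((xt ^ ei j : ↥((H (j+1)).map qh)) : T ⧸ S) = t ^ ei j := by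
              push_cast
              rfl
            rwa [hco] at h3
          have h5 : ∃ a : ℕ, (t ^ ei j) ^ p ^ a = 1 :=
            ⟨a, by rw [← pow_mul, mul_comm, pow_mul, ha, one_pow]⟩
          have h6 := IH (t ^ ei j) h4 h5
          rw [Finset.prod_range_succ, mul_comm, pow_mul]
          exact h6
      refine ⟨∏ i ∈ Finset.range n, ei i, Finset.prod_pos (fun i _ => hei0 i), fun t ht =>
        key n t ?_ ht⟩
      rw [hHbtop]
      exact Subgroup.mem_top t
    have hF : ∀ p, ∃ fp : ℕ, (p ∈ classPrimes C → 0 < fp ∧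
        ∀ t : T ⧸ S, (∃ a : ℕ, t ^ p ^ a = 1) → t ^ fp = 1) := by
      intro p
      by_cases hp : p ∈ classPrimes C
      · obtain ⟨fp, h1, h2⟩ := hD p hp
        exact ⟨fp, fun _ => ⟨h1, h2⟩⟩
      · exact ⟨1, fun h => absurd h hp⟩
    choose F hFspec using hF
    set π := e.primeFactors with hπdef
    have hπP : ∀ q ∈ π, q ∈ classPrimes C := by
      intro q hq
      obtain ⟨hq1, hq2, _⟩ := Nat.mem_primeFactors.mp hq
      exact heprimes q hq1 hq2
    set g := ∏ q ∈ π, q ^ ((F q).factorization q) with hgdef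
    have hg0 : 0 < g :=
      Finset.prod_pos (fun q hq => pow_pos (Nat.mem_primeFactors.mp hq).1.pos _)
    have hgprimes : ∀ r : ℕ, r.Prime → r ∣ g → r ∈ classPrimes C := by
      intro r hr hrg
      obtain ⟨i, hiπ, hri⟩ := (Nat.Prime.prime hr).exists_mem_finset_dvd hrg
      have hreq : r = i :=
        (Nat.prime_dvd_prime_iff_eq hr (Nat.mem_primeFactors.mp hiπ).1).mp
          (hr.dvd_of_dvd_pow hri)
      rw [hreq]
      exact hπP i hiπ
    have hcen : ∀ z ∈ Subgroup.center (T ⧸ S), z ^ g = 1 := by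
      intro z hzc
      by_cases hz1 : z = 1
      · rw [hz1, one_pow]
      obtain ⟨w, hwmem, hw1⟩ := hEss (Subgroup.zpowers z) (central_zpowers_normal hzc)
        (by rw [Ne, Subgroup.zpowers_eq_bot]; exact hz1)
      obtain ⟨k, hk⟩ := Subgroup.mem_zpowers_iff.mp (Subgroup.mem_inf.mp hwmem).1
      have hwe : w ^ e = 1 := hYbexp _ (Subgroup.mem_inf.mp hwmem).2
      have hk0 : k ≠ 0 := by
        rintro rfl
        rw [zpow_zero] at hk
        exact hw1 hk.symm
      have hzfin : IsOfFinOrder z := by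
        refine isOfFinOrder_of_zpow_eq_one z (k * (e : ℤ))
          (mul_ne_zero hk0 (by exact_mod_cast he0.ne')) ?_
        rw [zpow_mul, hk, zpow_natCast, hwe]
      set d := orderOf z with hddef
      have hd0 : 0 < d := hzfin.orderOf_pos
      have hq_in_π : ∀ q : ℕ, q.Prime → q ∣ d → q ∈ π := by
        intro q hq' hqd
        have hordz' : orderOf (z ^ (d / q)) = q := by
          rw [orderOf_pow' z (Nat.div_pos (Nat.le_of_dvd hd0 hqd) hq'.pos).ne']
          rw [← hddef, Nat.gcd_eq_right (Nat.div_dvd_of_dvd hqd)]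
          exact Nat.div_div_self hqd hd0.ne'
        have hz'c : z ^ (d / q) ∈ Subgroup.center (T ⧸ S) := Subgroup.pow_mem _ hzc _
        have hz'1 : z ^ (d / q) ≠ 1 := by
          intro h
          have h1 := orderOf_eq_one_iff.mpr h
          rw [hordz'] at h1
          exact hq'.one_lt.ne' h1
        obtain ⟨w', hw'mem, hw'1⟩ := hEss (Subgroup.zpowers (z ^ (d / q)))
          (central_zpowers_normal hz'c) (by rw [Ne, Subgroup.zpowers_eq_bot]; exact hz'1)
        have hdvd1 : orderOf w' ∣ q := by
          rw [← hordz']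
          exact orderOf_dvd_of_mem_zpowers (Subgroup.mem_inf.mp hw'mem).1
        have hdvd2 : orderOf w' ∣ e := orderOf_dvd_iff_pow_eq_one.mpr
          (hYbexp _ (Subgroup.mem_inf.mp hw'mem).2)
        have hordw' : orderOf w' = q := by
          rcases (Nat.Prime.eq_one_or_self_of_dvd hq' _ hdvd1) with h | h
          · exact absurd (orderOf_eq_one_iff.mp h) hw'1
          · exact h
        exact Nat.mem_primeFactors.mpr ⟨hq', hordw' ▸ hdvd2, he0.ne'⟩
      have hddvd : d ∣ g := by
        rw [← Nat.factorization_le_iff_dvd hd0.ne' hg0.ne']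
        intro q
        by_cases hq' : q.Prime
        · by_cases hqd : q ∣ d
          · have hqπ : q ∈ π := hq_in_π q hq' hqd
            obtain ⟨hF0, hFkill⟩ := hFspec q (hπP q hqπ)
            set dq := d.factorization q with hdqdef
            have hne1 : d / q ^ dq ≠ 0 := (Nat.ordCompl_pos q hd0.ne').ne'
            have hordzq : orderOf (z ^ (d / q ^ dq)) = q ^ dq := by
              rw [orderOf_pow' z hne1, ← hddef, Nat.gcd_eq_right (Nat.ordCompl_dvd d q)]
              exact Nat.div_div_self (Nat.ordProj_dvd d q) hd0.ne'
            have hzd : z ^ d = 1 := by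
              rw [hddef]
              exact pow_orderOf_eq_one z
            have htors : ∃ a : ℕ, (z ^ (d / q ^ dq)) ^ q ^ a = 1 := by
              refine ⟨dq, ?_⟩
              rw [← pow_mul, Nat.div_mul_cancel (Nat.ordProj_dvd d q)]
              exact hzd
            have hdvdF : q ^ dq ∣ F q := by
              rw [← hordzq]
              exact orderOf_dvd_iff_pow_eq_one.mpr (hFkill _ htors)
            have hle1 : dq ≤ (F q).factorization q :=
              (Nat.Prime.pow_dvd_iff_le_factorization hq' hF0.ne').mp hdvdF
            have hprodfact : g.factorization q
                = ∑ r ∈ π, ((r ^ ((F r).factorization r)).factorization) q := by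
              rw [hgdef, Nat.factorization_prod
                (fun r hr => (pow_pos (Nat.mem_primeFactors.mp hr).1.pos _).ne')]
              rw [Finsupp.finset_sum_apply]
            have hsingle : ((q ^ ((F q).factorization q)).factorization) q
                = (F q).factorization q := by
              rw [Nat.Prime.factorization_pow hq', Finsupp.single_eq_same]
            have hge : (F q).factorization q ≤ g.factorization q := by
              rw [hprodfact, ← hsingle]
              exact Finset.single_le_sum
                (f := fun r => ((r ^ ((F r).factorization r)).factorization) q)
                (fun r _ => Nat.zero_le _) hqπ
            exact le_trans hle1 hge
          · rw [Nat.factorization_eq_zero_of_not_dvd hqd]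
            exact Nat.zero_le _
        · rw [Nat.factorization_eq_zero_of_not_prime d hq']
          exact Nat.zero_le _
      exact orderOf_dvd_iff_pow_eq_one.mp hddvd
    set Eexp := g ^ n with hEdef
    have hEexp0 : 0 < Eexp := pow_pos hg0 n
    have hascend : IsAscendingCentralSeries Hb := ⟨hHb0, fun x i hx gb => hHbcomm i x hx gb⟩
    have hE : ∀ x : T ⧸ S, x ^ Eexp = 1 := by
      intro x
      refine ucs_exponent n (T ⧸ S) inferInstance g hcen x ?_
      have h1 : Hb n ≤ upperCentralSeries (T ⧸ S) n :=
        ascending_central_series_le_upper Hb hascend n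
      exact h1 (by rw [hHbtop]; exact Subgroup.mem_top x)
    have hEprimes : ∀ r : ℕ, r.Prime → r ∣ Eexp → r ∈ classPrimes C :=
      fun r hr hre => hgprimes r hr (hr.dvd_of_dvd_pow hre)
    have hclimb : ∀ j, C ↥(Hb j) := by
      intro j
      induction j with
      | zero =>
        haveI : Subsingleton ↥(Hb 0) := ⟨by
          rintro ⟨a, ha⟩ ⟨b, hb⟩
          rw [hHb0, Subgroup.mem_bot] at ha hb
          simp [Subtype.ext_iff, ha, hb]⟩
        exact Ctrivial hroot _
      | succ j IH =>
        letI := iBf j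
        have hexpB : ∀ b : Bf j, b ^ Eexp = 1 := by
          intro b
          obtain ⟨xt, rfl⟩ := hφsurj j b
          rw [← map_pow]
          have h1 : xt ^ Eexp = 1 := by
            have h2 : ((xt ^ Eexp : ↥((H (j+1)).map qh)) : T ⧸ S) = 1 := by
              push_cast
              exact hE _
            exact_mod_cast (OneMemClass.coe_eq_one).mp h2
          rw [h1, map_one]
        have hcardB : ∀ p : ℕ, p.Prime → p ∣ Eexp → cardBoundAt C (Bf j) p :=
          fun p hp hpd => (hφBd j p (hEprimes p hp hpd)).2
        have hCB : C (Bf j) :=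
          C_of_bounded_abelian hroot hper (Bf j) Eexp hEexp0 hEprimes hexpB hcardB
        haveI hN : ((Hb j).subgroupOf (Hb (j+1))).Normal :=
          subgroupOf_normal_of_comm (fun x hx y _ => hHbcomm j x hx y) (hHble j)
        have hkerN : (φf j).ker = (Hb j).subgroupOf (Hb (j+1)) := by
          ext x
          rw [MonoidHom.mem_ker, hφker j x, Subgroup.mem_subgroupOf]
          try rfl
        have hCsub : C ↥((Hb j).subgroupOf (Hb (j+1))) :=
          Ciso hroot (Subgroup.subgroupOfEquivOfLe (hHble j)).symm IH
        have hCquot : C (↥(Hb (j+1)) ⧸ (Hb j).subgroupOf (Hb (j+1))) := by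
          have e1 : ↥(Hb (j+1)) ⧸ (Hb j).subgroupOf (Hb (j+1)) ≃* Bf j :=
            (QuotientGroup.quotientMulEquivOfEq hkerN.symm).trans
              (QuotientGroup.quotientKerEquivOfSurjective (φf j) (hφsurj j))
          exact Ciso hroot e1.symm hCB
        exact Cext hroot ((Hb j).subgroupOf (Hb (j+1))) hCsub hCquot
    have hCTb : C (T ⧸ S) := by
      have h1 := hclimb n
      rw [hHbtop] at h1
      exact Ciso hroot Subgroup.topEquiv h1
    have hnilTb : Group.IsNilpotent (T ⧸ S) :=
      (nilpotent_iff_finite_ascending_central_series (T ⧸ S)).mpr ⟨n, Hb, hascend, hHbtop⟩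
    set N := S.comap σ with hNdef
    haveI hNnormal : N.Normal := hSnormal.comap σ
    set κ : X →* T ⧸ S := qh.comp σ with hκdef
    have hκsurj : Function.Surjective κ := hqsurj.comp hsurj
    have hκker : κ.ker = N := by
      ext x
      rw [MonoidHom.mem_ker, hκdef, MonoidHom.comp_apply, hNdef, Subgroup.mem_comap]
      exact QuotientGroup.eq_one_iff (σ x)
    have eX : X ⧸ N ≃* T ⧸ S :=
      (QuotientGroup.quotientMulEquivOfEq hκker.symm).trans
        (QuotientGroup.quotientKerEquivOfSurjective κ hκsurj)
    refine ⟨N, hNnormal, ⟨Ciso hroot eX.symm hCTb, ?_⟩, ?_⟩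
    · haveI := hnilTb
      exact nilpotent_of_surjective eX.symm.toMonoidHom eX.symm.surjective
    · apply le_antisymm
      · intro x hx
        obtain ⟨hxN, hxY⟩ := Subgroup.mem_inf.mp hx
        have hσx : σ x ∈ S ⊓ YT :=
          Subgroup.mem_inf.mpr ⟨hxN, Subgroup.mem_map_of_mem σ hxY⟩
        rw [hSint] at hσx
        obtain ⟨m, hmM, hm⟩ := hσx
        have hmx : m = x := hinj (hMY hmM) hxY hm
        rw [← hmx]
        exact hmM
      · intro m hmM
        refine Subgroup.mem_inf.mpr ⟨?_, hMY hmM⟩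
        show σ m ∈ S
        exact hMTS (Subgroup.mem_map_of_mem σ hmM)
  exact ⟨main, fun M hM hMY hQ => by
    obtain ⟨N, hN, hNil, hint⟩ := main M hM hMY hQ
    exact ⟨N, hN, hNil.1, hint⟩⟩


end Paper
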